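/- arXiv:1810.09744 — 8 statements merged into one kernel-verified Lean document; each statement's English description precedes it below -/
import Mathlib

section
/- If two paths in an intuitionistic unravelling end in the same world of the original model, they satisfy exactly the same intuitionistic propositional formulas: for (u_1,...,u_n), (v_1,...,v_k) ∈ W^un_w with u_n = v_k, Th_IL(M^un_w, (u_1,...,u_n)) = Th_IL(M^un_w, (v_1,...,v_k)). -/
/-- An intuitionistic Kripke Θ-model (frame conditions stated separately). -/
structure KModel (Θ : Type) where
  W : Type
  R : W → W → Prop
  V : Θ → W → Prop

/-- `M` is a genuine intuitionistic Kripke model: `R` is a preorder and `V` is monotone. -/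
def KModel.IsIntuitionistic {Θ : Type} (M : KModel Θ) : Prop :=
  (∀ w, M.R w w) ∧ (∀ u v w, M.R u v → M.R v w → M.R u w) ∧
    (∀ p u v, M.R u v → M.V p u → M.V p v)

/-- Intuitionistic propositional formulas over vocabulary Θ. -/
inductive IForm (Θ : Type) : Type
  | bot : IForm Θ
  | top : IForm Θ
  | atom : Θ → IForm Θ
  | and : IForm Θ → IForm Θ → IForm Θ
  | or : IForm Θ → IForm Θ → IForm Θ
  | impl : IForm Θ → IForm Θ → IForm Θ

/-- Standard intuitionistic Kripke satisfaction. -/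
def KModel.Sat {Θ : Type} (M : KModel Θ) : M.W → IForm Θ → Prop
  | _, .bot => False
  | _, .top => True
  | w, .atom p => M.V p w
  | w, .and φ ψ => M.Sat w φ ∧ M.Sat w ψ
  | w, .or φ ψ => M.Sat w φ ∨ M.Sat w ψ
  | w, .impl φ ψ => ∀ v, M.R w v → M.Sat v φ → M.Sat v ψ

/-- Worlds of the intuitionistic unravelling: R-paths starting at `w`
(the path `(w, u₁, ..., u_n)` is encoded by its tail `[u₁,...,u_n]`). -/
def KModel.Path {Θ : Type} (M : KModel Θ) (w : M.W) : Type :=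
  { l : List M.W // List.Chain M.R w l }

/-- The intuitionistic unravelling of `M` around `w`. -/
def KModel.unravel {Θ : Type} (M : KModel Θ) (w : M.W) : KModel Θ where
  W := M.Path w
  R := Relation.ReflTransGen (fun s t : M.Path w => ∃ u, t.1 = s.1 ++ [u])
  V p s := M.V p (s.1.getLastD w)

/-- The root `(w)` of the unravelling. -/
def KModel.root {Θ : Type} (M : KModel Θ) (w : M.W) : (M.unravel w).W :=
  ⟨[], List.Chain.nil⟩

/-- The last element of a path in the unravelling. -/
def KModel.last {Θ : Type} (M : KModel Θ) {w : M.W} (s : (M.unravel w).W) : M.W :=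
  s.1.getLastD w

/-- An asimulation from `(M₁,w₁)` to `(M₂,w₂)`; the relation
`A ⊆ (W₁×W₂) ∪ (W₂×W₁)` is given by its two components `A` and `A'`. -/
structure Asim {Θ : Type} (M₁ M₂ : KModel Θ) (w₁ : M₁.W) (w₂ : M₂.W)
    (A : M₁.W → M₂.W → Prop) (A' : M₂.W → M₁.W → Prop) : Prop where
  elem : A w₁ w₂
  satom₁ : ∀ p v s, A v s → M₁.V p v → M₂.V p s
  satom₂ : ∀ p v s, A' v s → M₂.V p v → M₁.V p s
  sback₁ : ∀ v s t, A v s → M₂.R s t → ∃ u, M₁.R v u ∧ A' t u ∧ A u t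
  sback₂ : ∀ v s t, A' v s → M₁.R s t → ∃ u, M₂.R v u ∧ A t u ∧ A' u t

/-- A bisimulation is a symmetric asimulation. -/
def Bisim {Θ : Type} (M₁ M₂ : KModel Θ) (w₁ : M₁.W) (w₂ : M₂.W)
    (B : M₁.W → M₂.W → Prop) : Prop :=
  Asim M₁ M₂ w₁ w₂ B (fun s v => B v s)

/-- A simulation from `(M₁,w₁)` to `(M₂,w₂)`. -/
structure Sim {Θ : Type} (M₁ M₂ : KModel Θ) (w₁ : M₁.W) (w₂ : M₂.W)
    (Z : M₁.W → M₂.W → Prop) : Prop where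
  elem : Z w₁ w₂
  atom : ∀ p v s, Z v s → M₁.V p v → M₂.V p s
  forth : ∀ v s u, Z v s → M₁.R v u → ∃ t, M₂.R s t ∧ Z u t

/-- `M` is `IL`-saturated. -/
def KModel.Saturated {Θ : Type} (M : KModel Θ) : Prop :=
  ∀ (v : M.W) (Γ Δ : Set (IForm Θ)),
    (∀ (Γ' Δ' : Finset (IForm Θ)), ↑Γ' ⊆ Γ → ↑Δ' ⊆ Δ →
      ∃ u, M.R v u ∧ (∀ φ ∈ Γ', M.Sat u φ) ∧ (∀ ψ ∈ Δ', ¬ M.Sat u ψ)) →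
    ∃ u, M.R v u ∧ (∀ φ ∈ Γ, M.Sat u φ) ∧ (∀ ψ ∈ Δ, ¬ M.Sat u ψ)

/-- The expansion `[M]` of `M` with fresh atoms `q⁺_w` (coded `.inr (.inl w)`)
and `q⁻_w` (coded `.inr (.inr w)`) for every world `w`. -/
def KModel.expand {Θ : Type} (M : KModel Θ) : KModel (Θ ⊕ (M.W ⊕ M.W)) where
  W := M.W
  R := M.R
  V q := match q with
    | Sum.inl p => M.V p
    | Sum.inr (Sum.inl w) => fun v => M.R w v
    | Sum.inr (Sum.inr w) => fun v => ¬ M.R v w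

/-- The submodel of `M` with universe `A`. -/
def KModel.restrict {Θ : Type} (M : KModel Θ) (A : Set M.W) : KModel Θ where
  W := A
  R a b := M.R a b
  V p a := M.V p a

/-!
Whether a path can be extended by a world `u` depends only on its last world, so every extension
of one path can be copied, with the same last world, onto any other path ending where it ends.
Hence "ending in the same world" is a bisimulation of the unravelling with itself, and satisfaction
is invariant under it by induction on the formula.
-/

theorem List.isChain_cons_append_singleton_iff {α : Type*} {R : α → α → Prop} {a b : α}
    {l : List α} : IsChain R (a :: l ++ [b]) ↔ IsChain R (a :: l) ∧ R (l.getLastD a) b := by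
  rw [List.isChain_append]
  simp [List.getLast?_cons]

namespace KModel

variable {Θ : Type} {M : KModel Θ} {w : M.W}

def unravelSnoc (s : (M.unravel w).W) (u : M.W) (h : M.R (M.last s) u) : (M.unravel w).W :=
  ⟨s.1 ++ [u], List.isChain_cons_append_singleton_iff.2 ⟨s.2, h⟩⟩

theorem exists_unravel_rel_last_eq {s s' t : (M.unravel w).W} (hss' : (M.unravel w).R s s')
    (h : M.last s = M.last t) : ∃ t', (M.unravel w).R t t' ∧ M.last t' = M.last s' := by
  induction hss' with
  | refl => exact ⟨t, .refl, h.symm⟩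
  | @tail b c _ hbc ih =>
    obtain ⟨u, hc⟩ := hbc
    obtain ⟨t', htt', hlast⟩ := ih
    have hRu : M.R (M.last b) u := by
      have hchain := c.2
      rw [hc] at hchain
      exact (List.isChain_cons_append_singleton_iff.1 hchain).2
    refine ⟨unravelSnoc t' u (hlast ▸ hRu), htt'.tail ⟨u, rfl⟩, ?_⟩
    simp only [KModel.last, unravelSnoc, hc, List.getLastD_concat]

theorem unravel_sat_of_last_eq (φ : IForm Θ) :
    ∀ {s t : (M.unravel w).W}, M.last s = M.last t →
      (M.unravel w).Sat s φ → (M.unravel w).Sat t φ := by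
  induction φ with
  | bot | top => exact fun _ h => h
  | atom p => exact fun h hs => (h ▸ hs : M.V p (M.last _))
  | and φ ψ ihφ ihψ => exact fun h hs => ⟨ihφ h hs.1, ihψ h hs.2⟩
  | or φ ψ ihφ ihψ => exact fun h hs => hs.imp (ihφ h) (ihψ h)
  | impl φ ψ ihφ ihψ =>
    intro s t h hs t' htt' ht'
    obtain ⟨s', hss', hlast⟩ := exists_unravel_rel_last_eq htt' h.symm
    exact ihψ hlast (hs s' hss' (ihφ hlast.symm ht'))

end KModel

theorem unravel_same_last_same_theory_general {Θ : Type} (M : KModel Θ) (w : M.W)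
    (s t : (M.unravel w).W)
    (h : M.last s = M.last t) :
    ∀ φ : IForm Θ, (M.unravel w).Sat s φ ↔ (M.unravel w).Sat t φ :=
  fun φ => ⟨KModel.unravel_sat_of_last_eq φ h, KModel.unravel_sat_of_last_eq φ h.symm⟩

/-- two paths of the unravelling ending in the same world satisfy
exactly the same intuitionistic formulas. -/
theorem unravel_same_last_same_theory {Θ : Type} (M : KModel Θ) (w : M.W)
    (hM : M.IsIntuitionistic) (s t : (M.unravel w).W)
    (h : M.last s = M.last t) :
    ∀ φ : IForm Θ, (M.unravel w).Sat s φ ↔ (M.unravel w).Sat t φ :=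
  unravel_same_last_same_theory_general M w s t h
end

section
/- Intuitionistic propositional logic satisfies the Tarski Union Property: if M_0 ≼_IL M_1 ≼_IL ... is a countable chain of IL-elementary submodels of intuitionistic Kripke models, then for every n, M_n is an IL-elementary submodel of the union ⋃_{n∈ω} M_n. -/
/-- Kripke models with worlds drawn from a fixed ambient type `α`
(used to form submodels, chains and unions). -/
structure SetModel (Θ α : Type) where
  W : Set α
  R : α → α → Prop
  V : Θ → Set α

def SetModel.IsIntuitionistic {Θ α : Type} (M : SetModel Θ α) : Prop :=
  (∀ w ∈ M.W, M.R w w) ∧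
    (∀ u ∈ M.W, ∀ v ∈ M.W, ∀ w ∈ M.W, M.R u v → M.R v w → M.R u w) ∧
    (∀ p, ∀ u ∈ M.W, ∀ v ∈ M.W, M.R u v → u ∈ M.V p → v ∈ M.V p) ∧
    (∀ p, M.V p ⊆ M.W)

def SetModel.Sat {Θ α : Type} (M : SetModel Θ α) : α → IForm Θ → Prop
  | _, .bot => False
  | _, .top => True
  | w, .atom p => w ∈ M.V p
  | w, .and φ ψ => M.Sat w φ ∧ M.Sat w ψ
  | w, .or φ ψ => M.Sat w φ ∨ M.Sat w ψ
  | w, .impl φ ψ => ∀ v ∈ M.W, M.R w v → M.Sat v φ → M.Sat v ψ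

/-- `M ⊆ N`: submodel. -/
def SetModel.Sub {Θ α : Type} (M N : SetModel Θ α) : Prop :=
  M.W ⊆ N.W ∧ (∀ a ∈ M.W, ∀ b ∈ M.W, (M.R a b ↔ N.R a b)) ∧
    ∀ p, M.V p = N.V p ∩ M.W

/-- `M ≼_IL N`: IL-elementary submodel. -/
def SetModel.Elem {Θ α : Type} (M N : SetModel Θ α) : Prop :=
  M.Sub N ∧ ∀ w ∈ M.W, ∀ φ, M.Sat w φ ↔ N.Sat w φ

/-- The componentwise union of a chain of models. -/
def chainUnion {Θ α : Type} (M : ℕ → SetModel Θ α) : SetModel Θ α where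
  W := ⋃ n, (M n).W
  R a b := ∃ n, a ∈ (M n).W ∧ b ∈ (M n).W ∧ (M n).R a b
  V p := ⋃ n, (M n).V p

/-- The space of pointed intuitionistic Kripke Θ-models. -/
def PModel (Θ : Type) : Type 1 :=
  { x : Σ M : KModel Θ, M.W // x.1.IsIntuitionistic }

/-- `IMod T`: the class of pointed models of the set of formulas `T`. -/
def IMod {Θ : Type} (T : Set (IForm Θ)) : Set (PModel Θ) :=
  { x | ∀ φ ∈ T, x.1.1.Sat x.1.2 φ }

/-- The set of intuitionistic formulas true in every member of `A`. -/
def ThPlus {Θ : Type} (A : Set (PModel Θ)) : Set (IForm Θ) :=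
  { φ | ∀ x ∈ A, x.1.1.Sat x.1.2 φ }

/-- Isomorphism of pointed models. -/
def PIso {Θ : Type} (x y : PModel Θ) : Prop :=
  ∃ e : x.1.1.W ≃ y.1.1.W, e x.1.2 = y.1.2 ∧
    (∀ a b, x.1.1.R a b ↔ y.1.1.R (e a) (e b)) ∧
    (∀ p a, x.1.1.V p a ↔ y.1.1.V p (e a))

/-- Intuitionistic-theory equivalence of pointed models. -/
def thSetoid (Θ : Type) : Setoid (PModel Θ) where
  r x y := ∀ φ, x.1.1.Sat x.1.2 φ ↔ y.1.1.Sat y.1.2 φ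
  iseqv := ⟨fun _ _ => Iff.rfl, fun h φ => (h φ).symm,
    fun h1 h2 φ => (h1 φ).trans (h2 φ)⟩


/-! By induction on formulas, a world of `M k` satisfies the same formulas in `M k` as in the
union. The only nontrivial case is implication: an `R`-successor `v` of `w` in the union already
lies in some `M m`, so `w` and `v` both live in `M (max k m)`, where elementarity of
`M k ≼ M (max k m)` transfers the implication from `M k`. -/

namespace SetModel

variable {Θ α : Type} {M N O : SetModel Θ α}

theorem Sub.V_subset_W (h : M.Sub N) (p : Θ) : M.V p ⊆ M.W := by
  rw [h.2.2 p]
  exact Set.inter_subset_right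

theorem Sub.R_iff (h : M.Sub N) {a b : α} (ha : a ∈ M.W) (hb : b ∈ M.W) :
    M.R a b ↔ N.R a b :=
  h.2.1 a ha b hb

theorem Sub.mem_V_iff (h : M.Sub N) {a : α} (ha : a ∈ M.W) (p : Θ) :
    a ∈ M.V p ↔ a ∈ N.V p := by
  rw [h.2.2 p, Set.mem_inter_iff, and_iff_left ha]

theorem Sub.trans (h₁ : M.Sub N) (h₂ : N.Sub O) : M.Sub O := by
  refine ⟨h₁.1.trans h₂.1, fun a ha b hb => ?_, fun p => ?_⟩
  · exact (h₁.R_iff ha hb).trans (h₂.R_iff (h₁.1 ha) (h₁.1 hb))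
  · rw [h₁.2.2 p, h₂.2.2 p, Set.inter_assoc, Set.inter_eq_self_of_subset_right h₁.1]

theorem Elem.trans (h₁ : M.Elem N) (h₂ : N.Elem O) : M.Elem O :=
  ⟨h₁.1.trans h₂.1, fun w hw φ => (h₁.2 w hw φ).trans (h₂.2 w (h₁.1.1 hw) φ)⟩

theorem Elem.refl_of_V_subset_W (hV : ∀ p, M.V p ⊆ M.W) : M.Elem M :=
  ⟨⟨subset_rfl, fun _ _ _ _ => Iff.rfl,
      fun p => (Set.inter_eq_self_of_subset_left (hV p)).symm⟩,
    fun _ _ _ => Iff.rfl⟩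

end SetModel

section Chain

variable {Θ α : Type} {M : ℕ → SetModel Θ α}

open SetModel

theorem elem_of_le_of_chain (hchain : ∀ n, (M n).Elem (M (n + 1))) {n m : ℕ} (h : n ≤ m) :
    (M n).Elem (M m) := by
  induction h with
  | refl => exact Elem.refl_of_V_subset_W ((hchain n).1.V_subset_W)
  | step _ ih => exact ih.trans (hchain _)

theorem mem_chainUnion_W {n : ℕ} {a : α} (ha : a ∈ (M n).W) : a ∈ (chainUnion M).W :=
  Set.mem_iUnion.2 ⟨n, ha⟩

theorem chainUnion_R_iff (hchain : ∀ n, (M n).Elem (M (n + 1))) {n : ℕ} {a b : α}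
    (ha : a ∈ (M n).W) (hb : b ∈ (M n).W) : (chainUnion M).R a b ↔ (M n).R a b := by
  refine ⟨fun ⟨m, ham, hbm, hR⟩ => ?_, fun hR => ⟨n, ha, hb, hR⟩⟩
  have hn := (elem_of_le_of_chain hchain (le_max_left n m)).1
  have hm := (elem_of_le_of_chain hchain (le_max_right n m)).1
  exact (hn.R_iff ha hb).2 ((hm.R_iff ham hbm).1 hR)

theorem mem_chainUnion_V_iff (hchain : ∀ n, (M n).Elem (M (n + 1))) {n : ℕ} {a : α}
    (ha : a ∈ (M n).W) (p : Θ) : a ∈ (chainUnion M).V p ↔ a ∈ (M n).V p := by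
  refine ⟨fun h => ?_, fun h => Set.mem_iUnion.2 ⟨n, h⟩⟩
  obtain ⟨m, ham⟩ := Set.mem_iUnion.1 h
  have hn := (elem_of_le_of_chain hchain (le_max_left n m)).1
  have hm := (elem_of_le_of_chain hchain (le_max_right n m)).1
  exact (hn.mem_V_iff ha p).2 ((hm.mem_V_iff (hm.V_subset_W p ham) p).1 ham)

theorem sub_chainUnion (hchain : ∀ n, (M n).Elem (M (n + 1))) (n : ℕ) :
    (M n).Sub (chainUnion M) := by
  refine ⟨fun _ => mem_chainUnion_W, fun a ha b hb => (chainUnion_R_iff hchain ha hb).symm,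
    fun p => ?_⟩
  ext a
  exact ⟨fun h => ⟨Set.mem_iUnion.2 ⟨n, h⟩, (hchain n).1.V_subset_W p h⟩,
    fun ⟨h, ha⟩ => (mem_chainUnion_V_iff hchain ha p).1 h⟩

theorem sat_iff_chainUnion_sat (hchain : ∀ n, (M n).Elem (M (n + 1))) (φ : IForm Θ) :
    ∀ {k : ℕ} {w : α}, w ∈ (M k).W → ((M k).Sat w φ ↔ (chainUnion M).Sat w φ) := by
  induction φ with
  | bot | top => exact fun _ => Iff.rfl
  | atom p => exact fun hw => (mem_chainUnion_V_iff hchain hw p).symm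
  | and φ ψ ihφ ihψ => exact fun hw => and_congr (ihφ hw) (ihψ hw)
  | or φ ψ ihφ ihψ => exact fun hw => or_congr (ihφ hw) (ihψ hw)
  | impl φ ψ ihφ ihψ =>
    intro k w hw
    constructor
    · rintro h v - ⟨m, hwm, hvm, hR⟩ hφ
      have hkj := elem_of_le_of_chain hchain (le_max_left k m)
      have hmj := (elem_of_le_of_chain hchain (le_max_right k m)).1
      have hvj := hmj.1 hvm
      have hRj : (M (max k m)).R w v := (hmj.R_iff hwm hvm).1 hR
      have hsat : (M (max k m)).Sat w (.impl φ ψ) := (hkj.2 w hw _).1 h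
      exact (ihψ hvj).1 (hsat v hvj hRj ((ihφ hvj).2 hφ))
    · intro h v hv hR hφ
      exact (ihψ hv).2 (h v (mem_chainUnion_W hv) ⟨k, hw, hv, hR⟩ ((ihφ hv).1 hφ))

end Chain

theorem tarski_union_property_general {Θ α : Type} (M : ℕ → SetModel Θ α)
    (hchain : ∀ n, (M n).Elem (M (n + 1))) :
    ∀ n, (M n).Elem (chainUnion M) :=
  fun n => ⟨sub_chainUnion hchain n, fun _ hw φ => sat_iff_chainUnion_sat hchain φ hw⟩

/-- Tarski Union Property for intuitionistic propositional logic: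
every member of an IL-elementary chain is an IL-elementary submodel of the union. -/
theorem tarski_union_property {Θ α : Type} (M : ℕ → SetModel Θ α)
    (hint : ∀ n, (M n).IsIntuitionistic)
    (hchain : ∀ n, (M n).Elem (M (n + 1))) :
    ∀ n, (M n).Elem (chainUnion M) :=
  tarski_union_property_general M hchain
end

section
/- Let (M_1, w_1) and (M_2, w_2) be pointed intuitionistic Kripke Θ-models that are both IL-saturated, and suppose every intuitionistic formula true at (M_1, w_1) is true at (M_2, w_2). Then the relation A, defined for u ∈ W_i and s ∈ W_j (with {i,j} = {1,2}) by u A s iff Th⁺_IL(M_i, u) ⊆ Th⁺_IL(M_j, s), is an asimulation from (M_1, w_1) to (M_2, w_2). -/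
/-! If `s R t` and `Th⁺(v) ⊆ Th⁺(s)`, then for finite `Γ' ⊆ Th⁺(t)` and `Δ' ⊆ Th⁻(t)` the formula
`⋀Γ' → ⋁Δ'` fails at `s` (witnessed by `t`), hence at `v`, so some successor of `v` realizes
`(Γ', Δ')`. Saturation then gives a successor of `v` with exactly the theory of `t`, which is
related to `t` by `A` in both directions. -/

namespace IForm

variable {Θ : Type}

def conj (l : List (IForm Θ)) : IForm Θ := l.foldr .and .top

def disj (l : List (IForm Θ)) : IForm Θ := l.foldr .or .bot

end IForm

namespace KModel

variable {Θ : Type}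

theorem sat_conj (M : KModel Θ) (w : M.W) (l : List (IForm Θ)) :
    M.Sat w (IForm.conj l) ↔ ∀ φ ∈ l, M.Sat w φ := by
  induction l with
  | nil => simp [IForm.conj, Sat]
  | cons a l ih => simp only [List.forall_mem_cons, ← ih]; rfl

theorem sat_disj (M : KModel Θ) (w : M.W) (l : List (IForm Θ)) :
    M.Sat w (IForm.disj l) ↔ ∃ φ ∈ l, M.Sat w φ := by
  induction l with
  | nil => simp [IForm.disj, Sat]
  | cons a l ih => simp only [List.exists_mem_cons_iff, ← ih]; rfl

variable {M N : KModel Θ} {v : M.W} {s t : N.W}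

theorem exists_succ_realizing_finset (hvs : ∀ φ, M.Sat v φ → N.Sat s φ) (hst : N.R s t)
    (Γ Δ : Finset (IForm Θ)) (hΓ : ∀ φ ∈ Γ, N.Sat t φ) (hΔ : ∀ ψ ∈ Δ, ¬ N.Sat t ψ) :
    ∃ u, M.R v u ∧ (∀ φ ∈ Γ, M.Sat u φ) ∧ ∀ ψ ∈ Δ, ¬ M.Sat u ψ := by
  let χ : IForm Θ := .impl (IForm.conj Γ.toList) (IForm.disj Δ.toList)
  have hsχ : ¬ N.Sat s χ := fun h => by
    obtain ⟨ψ, hψ, htψ⟩ := (N.sat_disj t _).mp <|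
      h t hst ((N.sat_conj t _).mpr fun φ hφ => hΓ φ (Finset.mem_toList.mp hφ))
    exact hΔ ψ (Finset.mem_toList.mp hψ) htψ
  have hvχ : ¬ M.Sat v χ := fun h => hsχ (hvs χ h)
  simp only [χ, Sat, not_forall, sat_conj, sat_disj, Finset.mem_toList] at hvχ
  obtain ⟨u, hvu, hΓu, hΔu⟩ := hvχ
  exact ⟨u, hvu, hΓu, fun ψ hψ hu => hΔu ⟨ψ, hψ, hu⟩⟩

theorem Saturated.exists_succ_sat_iff (hM : M.Saturated) (hvs : ∀ φ, M.Sat v φ → N.Sat s φ)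
    (hst : N.R s t) : ∃ u, M.R v u ∧ ∀ φ, M.Sat u φ ↔ N.Sat t φ := by
  obtain ⟨u, hvu, hpos, hneg⟩ := hM v {φ | N.Sat t φ} {φ | ¬ N.Sat t φ}
    fun Γ Δ hΓ hΔ => exists_succ_realizing_finset hvs hst Γ Δ hΓ hΔ
  exact ⟨u, hvu, fun φ => ⟨fun hu => by_contra fun ht => hneg φ ht hu, hpos φ⟩⟩

end KModel

theorem saturated_asimulation_general {Θ : Type} (M₁ M₂ : KModel Θ)
    (w₁ : M₁.W) (w₂ : M₂.W)
    (hs₁ : M₁.Saturated) (hs₂ : M₂.Saturated)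
    (hw : ∀ φ : IForm Θ, M₁.Sat w₁ φ → M₂.Sat w₂ φ) :
    Asim M₁ M₂ w₁ w₂
      (fun u s => ∀ φ : IForm Θ, M₁.Sat u φ → M₂.Sat s φ)
      (fun s u => ∀ φ : IForm Θ, M₂.Sat s φ → M₁.Sat u φ) := by
  refine ⟨hw, fun p _ _ hA => hA (.atom p), fun p _ _ hA => hA (.atom p), ?_, ?_⟩
  · intro v s t hvs hst
    obtain ⟨u, hvu, hut⟩ := hs₁.exists_succ_sat_iff hvs hst
    exact ⟨u, hvu, fun φ => (hut φ).mpr, fun φ => (hut φ).mp⟩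
  · intro v s t hvs hst
    obtain ⟨u, hvu, hut⟩ := hs₂.exists_succ_sat_iff hvs hst
    exact ⟨u, hvu, fun φ => (hut φ).mpr, fun φ => (hut φ).mp⟩

/-- between IL-saturated models, inclusion of positive
intuitionistic theories defines an asimulation. -/
theorem saturated_asimulation {Θ : Type} (M₁ M₂ : KModel Θ)
    (w₁ : M₁.W) (w₂ : M₂.W)
    (h₁ : M₁.IsIntuitionistic) (h₂ : M₂.IsIntuitionistic)
    (hs₁ : M₁.Saturated) (hs₂ : M₂.Saturated)
    (hw : ∀ φ : IForm Θ, M₁.Sat w₁ φ → M₂.Sat w₂ φ) :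
    Asim M₁ M₂ w₁ w₂
      (fun u s => ∀ φ : IForm Θ, M₁.Sat u φ → M₂.Sat s φ)
      (fun s u => ∀ φ : IForm Θ, M₂.Sat s φ → M₁.Sat u φ) :=
  saturated_asimulation_general M₁ M₂ w₁ w₂ hs₁ hs₂ hw
end

section
/- Let (M, w) and (N, u) be pointed intuitionistic Kripke models and let Z be a total simulation from (M^un_w, (w)) to (N, u), i.e., a simulation whose left projection is all of W^un_w. Then there exists a homomorphism h : M^un_w → N with h((w)) = u and v Z h(v) for every v ∈ W^un_w. -/
/-! In the unravelling every non-root path `l ++ [a]` has the unique immediate predecessor `l`,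
so `h` can be defined by recursion along paths: `h((w)) = u`, and `h(l ++ [a])` is a `Z`-partner
of `l ++ [a]` that the forth condition provides above `h(l)`. Such an `h` is monotone along
one-step extensions, hence along their reflexive–transitive closure because `N.R` is a preorder. -/

theorem List.exists_map_of_forth {α β : Type*} {P : List α → Prop} {S : β → β → Prop}
    {Z : List α → β → Prop} {u : β} (hP : ∀ l a, P (l ++ [a]) → P l) (h₀ : Z [] u)
    (forth : ∀ l a t, P (l ++ [a]) → Z l t → ∃ t', S t t' ∧ Z (l ++ [a]) t') :
    ∃ f : List α → β, f [] = u ∧ (∀ l, P l → Z l (f l)) ∧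
      ∀ l a, P (l ++ [a]) → S (f l) (f (l ++ [a])) := by
  classical
  have : ∀ l a t, ∃ t', P (l ++ [a]) → Z l t → S t t' ∧ Z (l ++ [a]) t' := by
    intro l a t
    by_cases h : P (l ++ [a]) ∧ Z l t
    · obtain ⟨t', ht'⟩ := forth l a t h.1 h.2
      exact ⟨t', fun _ _ => ht'⟩
    · exact ⟨t, fun hl ht => absurd ⟨hl, ht⟩ h⟩
  choose next hnext using this
  let f : List α → β := fun l => l.reverseRecOn u fun l a t => next l a t
  have f_nil : f [] = u := List.reverseRecOn_nil ..
  have f_concat (l a) : f (l ++ [a]) = next l a (f l) := List.reverseRecOn_concat ..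
  have hZf (l) (hl : P l) : Z l (f l) := by
    induction l using List.reverseRecOn with
    | nil => exact f_nil ▸ h₀
    | append_singleton l a ih => exact f_concat l a ▸ (hnext l a _ hl (ih (hP l a hl))).2
  exact ⟨f, f_nil, hZf, fun l a hl => f_concat l a ▸ (hnext l a _ hl (hZf l (hP l a hl))).1⟩

namespace KModel

variable {Θ : Type} {M N : KModel Θ} {w : M.W}

theorem map_R_of_unravel_step (hrefl : ∀ s, N.R s s)
    (htrans : ∀ r s t, N.R r s → N.R s t → N.R r t) {f : (M.unravel w).W → N.W}
    (hf : ∀ s t : (M.unravel w).W, (∃ a, t.1 = s.1 ++ [a]) → N.R (f s) (f t))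
    {v v' : (M.unravel w).W} (h : (M.unravel w).R v v') : N.R (f v) (f v') := by
  have : Std.Refl N.R := ⟨hrefl⟩
  have : IsTrans N.W N.R := ⟨htrans⟩
  simpa only [Relation.reflTransGen_eq_self] using Relation.ReflTransGen.lift (p := N.R) f hf _ _ h

end KModel

theorem total_simulation_homomorphism_general {Θ : Type} (M N : KModel Θ)
    (w : M.W) (u : N.W)
    (hN : N.IsIntuitionistic)
    (Z : (M.unravel w).W → N.W → Prop)
    (hZ : Sim (M.unravel w) N (M.root w) u Z) :
    ∃ h : (M.unravel w).W → N.W, h (M.root w) = u ∧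
      (∀ v, Z v (h v)) ∧
      (∀ p v, (M.unravel w).V p v → N.V p (h v)) ∧
      (∀ v v', (M.unravel w).R v v' → N.R (h v) (h v')) := by
  obtain ⟨f, hf_root, hZf, hf_step⟩ := List.exists_map_of_forth
    (P := fun l => List.IsChain M.R (w :: l)) (S := N.R) (Z := fun l t => ∃ hl, Z ⟨l, hl⟩ t)
    (fun _ a hl => hl.left_of_append (l₂ := [a])) ⟨.singleton w, hZ.elem⟩ fun l a t hl ⟨_, ht⟩ =>
      (hZ.forth _ _ _ ht (.single ⟨a, rfl⟩)).imp fun _ h => ⟨h.1, hl, h.2⟩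
  have hZh (v : (M.unravel w).W) : Z v (f v.1) := (hZf v.1 v.2).2
  refine ⟨fun v => f v.1, hf_root, hZh, fun p v hv => hZ.atom p v _ (hZh v) hv,
    fun _ _ => KModel.map_R_of_unravel_step (f := fun v => f v.1) hN.1 hN.2.1 ?_⟩
  rintro s t ⟨a, hst⟩
  simpa only [hst] using hf_step s.1 a (hst ▸ t.2)

/-- a total simulation from an unravelling yields a homomorphism
`h` with `h((w)) = u` and `v Z h(v)` for all `v`. -/
theorem total_simulation_homomorphism {Θ : Type} (M N : KModel Θ)
    (w : M.W) (u : N.W)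
    (hM : M.IsIntuitionistic) (hN : N.IsIntuitionistic)
    (Z : (M.unravel w).W → N.W → Prop)
    (hZ : Sim (M.unravel w) N (M.root w) u Z)
    (htotal : ∀ v : (M.unravel w).W, ∃ s, Z v s) :
    ∃ h : (M.unravel w).W → N.W, h (M.root w) = u ∧
      (∀ v, Z v (h v)) ∧
      (∀ p v, (M.unravel w).V p v → N.V p (h v)) ∧
      (∀ v v', (M.unravel w).R v v' → N.R (h v) (h v')) :=
  total_simulation_homomorphism_general M N w u hN Z hZ
end

section
/- Intuitionistic propositional logic is intuitionistically compact: an IL(Θ)-theory (Γ, Δ) is satisfiable in some pointed intuitionistic Kripke model (all formulas of Γ true and all formulas of Δ false at the point) whenever every pair (Γ', Δ') with Γ' ⊆ Γ and Δ' ⊆ Δ finite is so satisfiable. -/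
/-!
A canonical-model argument, with finite satisfiability in place of consistency in a proof
system. Call `T` complete if the pair `(T, Tᶜ)` is finitely satisfiable. Finite satisfiability
has finite character, and adding a formula to one side or the other of a finitely satisfiable
pair keeps it finitely satisfiable; so by Zorn's lemma every finitely satisfiable `(Γ, Δ)`
extends to a complete `T ⊇ Γ` missing `Δ`. The complete sets, ordered by inclusion, form an
intuitionistic Kripke model in which truth is membership. In the implication case, persistence
makes `(T ∪ {φ}, {ψ})` finitely satisfiable whenever `φ → ψ ∉ T`, and a completion of it refutes
`φ → ψ` at `T`.
-/

theorem KModel.IsIntuitionistic.sat_mono {Θ : Type} {M : KModel Θ} (hM : M.IsIntuitionistic)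
    {w v : M.W} (hwv : M.R w v) {φ : IForm Θ} (h : M.Sat w φ) : M.Sat v φ := by
  induction φ with
  | bot | top => exact h
  | atom p => exact hM.2.2 p w v hwv h
  | and φ ψ ihφ ihψ => exact ⟨ihφ h.1, ihψ h.2⟩
  | or φ ψ ihφ ihψ => exact h.imp ihφ ihψ
  | impl φ ψ => exact fun u hvu => h u (hM.2.1 w v u hwv hvu)

namespace IForm

variable {Θ : Type}

def Satisfiable (Γ Δ : Set (IForm Θ)) : Prop :=
  ∃ (M : KModel Θ) (w : M.W), M.IsIntuitionistic ∧ (∀ φ ∈ Γ, M.Sat w φ) ∧ ∀ ψ ∈ Δ, ¬ M.Sat w ψ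

def FinitelySatisfiable (Γ Δ : Set (IForm Θ)) : Prop :=
  ∀ Γ' Δ' : Finset (IForm Θ), ↑Γ' ⊆ Γ → ↑Δ' ⊆ Δ → Satisfiable (Γ' : Set (IForm Θ)) Δ'

def Entails (Γ Δ : Set (IForm Θ)) : Prop :=
  ∀ (M : KModel Θ) (w : M.W), M.IsIntuitionistic → (∀ φ ∈ Γ, M.Sat w φ) → ∃ ψ ∈ Δ, M.Sat w ψ

theorem Satisfiable.not_entails {Γ Δ : Set (IForm Θ)} (h : Satisfiable Γ Δ) : ¬ Entails Γ Δ := by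
  intro hE
  obtain ⟨M, w, hM, hΓ, hΔ⟩ := h
  obtain ⟨ψ, hψ, hsat⟩ := hE M w hM hΓ
  exact hΔ ψ hψ hsat

namespace FinitelySatisfiable

variable {Γ Δ : Set (IForm Θ)}

theorem mono {Γ₀ Δ₀ : Set (IForm Θ)} (h : FinitelySatisfiable Γ Δ) (hΓ : Γ₀ ⊆ Γ) (hΔ : Δ₀ ⊆ Δ) :
    FinitelySatisfiable Γ₀ Δ₀ :=
  fun Γ' Δ' hΓ' hΔ' => h Γ' Δ' (hΓ'.trans hΓ) (hΔ'.trans hΔ)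

theorem disjoint (h : FinitelySatisfiable Γ Δ) : Disjoint Γ Δ := by
  refine Set.disjoint_left.2 fun χ hΓ hΔ => ?_
  obtain ⟨M, w, -, hχ, hnχ⟩ := h {χ} {χ} (by simpa using hΓ) (by simpa using hΔ)
  exact hnχ χ (by simp) (hχ χ (by simp))

theorem insert_or_insert (h : FinitelySatisfiable Γ Δ) (χ : IForm Θ) :
    FinitelySatisfiable (insert χ Γ) Δ ∨ FinitelySatisfiable Γ (insert χ Δ) := by
  classical
  by_contra! hfail
  simp only [FinitelySatisfiable, not_forall] at hfail
  obtain ⟨⟨Γ₁, Δ₁, hΓ₁, hΔ₁, hunsat₁⟩, ⟨Γ₂, Δ₂, hΓ₂, hΔ₂, hunsat₂⟩⟩ := hfail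
  obtain ⟨M, w, hM, hΓ, hΔ⟩ := h (Γ₁.erase χ ∪ Γ₂) (Δ₁ ∪ Δ₂.erase χ)
    (by simpa using ⟨hΓ₁, hΓ₂⟩)
    (by simpa using ⟨hΔ₁, hΔ₂⟩)
  by_cases hχ : M.Sat w χ
  · refine hunsat₁ ⟨M, w, hM, fun φ hφ => ?_, fun ψ hψ => hΔ ψ (by simp_all)⟩
    rcases eq_or_ne φ χ with rfl | hne
    exacts [hχ, hΓ φ (by simp_all)]
  · refine hunsat₂ ⟨M, w, hM, fun φ hφ => hΓ φ (by simp_all), fun ψ hψ => ?_⟩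
    rcases eq_or_ne ψ χ with rfl | hne
    exacts [hχ, hΔ ψ (by simp_all)]

theorem biUnion_of_isChain {c : Set (Set (IForm Θ) × Set (IForm Θ))}
    (hc : IsChain (· ≤ ·) c) (hne : c.Nonempty) (h : ∀ p ∈ c, FinitelySatisfiable p.1 p.2) :
    FinitelySatisfiable (⋃ p ∈ c, p.1) (⋃ p ∈ c, p.2) := by
  intro Γ' Δ' hΓ' hΔ'
  obtain ⟨p, hp, hΓp⟩ := DirectedOn.exists_mem_subset_of_finset_subset_biUnion hne
    (hc.directedOn.mono fun _ _ h => h.1) hΓ'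
  obtain ⟨q, hq, hΔq⟩ := DirectedOn.exists_mem_subset_of_finset_subset_biUnion hne
    (hc.directedOn.mono fun _ _ h => h.2) hΔ'
  obtain ⟨r, hr, hpr, hqr⟩ := hc.directedOn p hp q hq
  exact h r hr Γ' Δ' (hΓp.trans hpr.1) (hΔq.trans hqr.2)

theorem exists_complete (h : FinitelySatisfiable Γ Δ) :
    ∃ T, Γ ⊆ T ∧ Δ ⊆ Tᶜ ∧ FinitelySatisfiable T Tᶜ := by
  obtain ⟨⟨T, D⟩, ⟨hΓT, hΔD⟩, hmax⟩ := zorn_le_nonempty₀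
    {p : Set (IForm Θ) × Set (IForm Θ) | FinitelySatisfiable p.1 p.2}
    (fun c hcS hc p hp => ⟨(⋃ q ∈ c, q.1, ⋃ q ∈ c, q.2), biUnion_of_isChain hc ⟨p, hp⟩ hcS,
      fun q hq => ⟨Set.subset_biUnion_of_mem (u := Prod.fst) hq,
        Set.subset_biUnion_of_mem (u := Prod.snd) hq⟩⟩) (Γ, Δ) h
  have hTD : FinitelySatisfiable T D := hmax.prop
  have hcover : Tᶜ ⊆ D := fun χ hχ => by
    rcases hTD.insert_or_insert χ with hT | hD
    · exact absurd ((hmax.2 (y := (insert χ T, D)) hT ⟨Set.subset_insert χ T, le_rfl⟩).1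
        (Set.mem_insert χ T)) hχ
    · exact (hmax.2 (y := (T, insert χ D)) hD ⟨le_rfl, Set.subset_insert χ D⟩).2
        (Set.mem_insert χ D)
  exact ⟨T, hΓT, hΔD.trans hTD.disjoint.subset_compl_left, hTD.mono le_rfl hcover⟩

theorem exists_mem_of_entails {T : Set (IForm Θ)} (hT : FinitelySatisfiable T Tᶜ)
    {Γ' Δ' : Finset (IForm Θ)} (hΓ' : ↑Γ' ⊆ T) (hE : Entails (Γ' : Set (IForm Θ)) Δ') :
    ∃ ψ ∈ Δ', ψ ∈ T := by
  by_contra! hΔ'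
  exact (hT Γ' Δ' hΓ' hΔ').not_entails hE

theorem mem_of_entails {T : Set (IForm Θ)} (hT : FinitelySatisfiable T Tᶜ)
    {Γ' : Finset (IForm Θ)} (hΓ' : ↑Γ' ⊆ T) {ψ : IForm Θ}
    (hE : ∀ (M : KModel Θ) (w : M.W), M.IsIntuitionistic → (∀ φ ∈ Γ', M.Sat w φ) → M.Sat w ψ) :
    ψ ∈ T := by
  simpa using hT.exists_mem_of_entails (Δ' := {ψ}) hΓ'
    fun M w hM hΓ => ⟨ψ, Finset.mem_singleton_self ψ, hE M w hM hΓ⟩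

theorem insert_singleton_of_impl_notMem {T : Set (IForm Θ)} (hT : FinitelySatisfiable T Tᶜ)
    {φ ψ : IForm Θ} (himpl : φ.impl ψ ∉ T) : FinitelySatisfiable (insert φ T) {ψ} := by
  classical
  intro Γ' Δ' hΓ' hΔ'
  obtain ⟨M, w, hM, hΓ, hΔ⟩ :=
    hT (Γ'.erase φ) {φ.impl ψ} (by simpa using hΓ') (by simpa using himpl)
  obtain ⟨v, hwv, hφ, hψ⟩ : ∃ v, M.R w v ∧ M.Sat v φ ∧ ¬ M.Sat v ψ := by
    simpa [KModel.Sat] using hΔ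
  refine ⟨M, v, hM, fun χ hχ => ?_, fun χ hχ => ?_⟩
  · rcases eq_or_ne χ φ with rfl | hne
    exacts [hφ, hM.sat_mono hwv (hΓ χ (by simp_all))]
  · obtain rfl : χ = ψ := hΔ' hχ
    exact hψ

end FinitelySatisfiable

end IForm

namespace KModel

open IForm

variable {Θ : Type}

def canonical (Θ : Type) : KModel Θ where
  W := {T : Set (IForm Θ) // FinitelySatisfiable T Tᶜ}
  R T U := T.1 ⊆ U.1
  V p T := atom p ∈ T.1

theorem canonical_isIntuitionistic : (canonical Θ).IsIntuitionistic :=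
  ⟨fun _ => subset_rfl, fun _ _ _ => Set.Subset.trans, fun _ _ _ hTU h => hTU h⟩

theorem exists_canonical_rel_of_impl_notMem (T : (canonical Θ).W) {φ ψ : IForm Θ}
    (himpl : φ.impl ψ ∉ T.1) : ∃ U, (canonical Θ).R T U ∧ φ ∈ U.1 ∧ ψ ∉ U.1 := by
  obtain ⟨U, hTU, hψU, hU⟩ := (T.2.insert_singleton_of_impl_notMem himpl).exists_complete
  exact ⟨⟨U, hU⟩, (Set.subset_insert φ T.1).trans hTU, hTU (Set.mem_insert φ T.1), hψU rfl⟩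

theorem canonical_sat_iff (φ : IForm Θ) (T : (canonical Θ).W) :
    (canonical Θ).Sat T φ ↔ φ ∈ T.1 := by
  classical
  induction φ generalizing T with
  | bot =>
    refine ⟨False.elim, fun h => ?_⟩
    simpa using T.2.exists_mem_of_entails (Γ' := {bot}) (Δ' := ∅) (by simpa using h)
      fun M w _ h => (h bot (Finset.mem_singleton_self _)).elim
  | top => exact ⟨fun _ => T.2.mem_of_entails (Γ' := ∅) (by simp) fun _ _ _ _ => trivial,
      fun _ => trivial⟩
  | atom p => rfl
  | and φ ψ ihφ ihψ =>
    refine (and_congr (ihφ T) (ihψ T)).trans ⟨fun ⟨hφ, hψ⟩ => ?_, fun h => ⟨?_, ?_⟩⟩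
    · exact T.2.mem_of_entails (Γ' := {φ, ψ}) (by simp [Set.insert_subset_iff, hφ, hψ])
        fun _ _ _ h => ⟨h φ (by simp), h ψ (by simp)⟩
    · exact T.2.mem_of_entails (Γ' := {φ.and ψ}) (by simpa using h)
        fun _ _ _ h => (h (φ.and ψ) (by simp)).1
    · exact T.2.mem_of_entails (Γ' := {φ.and ψ}) (by simpa using h)
        fun _ _ _ h => (h (φ.and ψ) (by simp)).2
  | or φ ψ ihφ ihψ =>
    refine (or_congr (ihφ T) (ihψ T)).trans ⟨fun h => ?_, fun h => ?_⟩
    · rcases h with hφ | hψ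
      · exact T.2.mem_of_entails (Γ' := {φ}) (by simpa using hφ)
          fun _ _ _ h => .inl (h φ (by simp))
      · exact T.2.mem_of_entails (Γ' := {ψ}) (by simpa using hψ)
          fun _ _ _ h => .inr (h ψ (by simp))
    · simpa using T.2.exists_mem_of_entails (Γ' := {φ.or ψ}) (Δ' := {φ, ψ}) (by simpa using h)
        fun M w _ h => (h (φ.or ψ) (by simp) : M.Sat w φ ∨ M.Sat w ψ).elim
          (fun hφ => ⟨φ, by simp, hφ⟩) fun hψ => ⟨ψ, by simp, hψ⟩
  | impl φ ψ ihφ ihψ =>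
    constructor
    · intro h
      by_contra himpl
      obtain ⟨U, hTU, hφU, hψU⟩ := exists_canonical_rel_of_impl_notMem T himpl
      exact hψU ((ihψ U).1 (h U hTU ((ihφ U).2 hφU)))
    · intro h U hTU hφ
      refine (ihψ U).2 (U.2.mem_of_entails (Γ' := {φ.impl ψ, φ}) ?_ fun M w hM h => ?_)
      · simp [Set.insert_subset_iff, hTU h, (ihφ U).1 hφ]
      · exact h (φ.impl ψ) (by simp) w (hM.1 w) (h φ (by simp))

end KModel

theorem IForm.FinitelySatisfiable.satisfiable {Θ : Type} {Γ Δ : Set (IForm Θ)}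
    (h : FinitelySatisfiable Γ Δ) : Satisfiable Γ Δ := by
  obtain ⟨T, hΓT, hΔT, hT⟩ := h.exists_complete
  exact ⟨KModel.canonical Θ, ⟨T, hT⟩, KModel.canonical_isIntuitionistic,
    fun φ hφ => (KModel.canonical_sat_iff φ _).2 (hΓT hφ),
    fun ψ hψ hsat => hΔT hψ ((KModel.canonical_sat_iff ψ _).1 hsat)⟩

/-- intuitionistic compactness: a theory `(Γ, Δ)` is satisfiable
in a pointed intuitionistic Kripke model whenever all its finite subtheories are. -/
theorem intuitionistic_compactness {Θ : Type} (Γ Δ : Set (IForm Θ))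
    (h : ∀ (Γ' Δ' : Finset (IForm Θ)), ↑Γ' ⊆ Γ → ↑Δ' ⊆ Δ →
      ∃ (M : KModel Θ) (w : M.W), M.IsIntuitionistic ∧
        (∀ φ ∈ Γ', M.Sat w φ) ∧ (∀ ψ ∈ Δ', ¬ M.Sat w ψ)) :
    ∃ (M : KModel Θ) (w : M.W), M.IsIntuitionistic ∧
      (∀ φ ∈ Γ, M.Sat w φ) ∧ (∀ ψ ∈ Δ, ¬ M.Sat w ψ) := by
  exact IForm.FinitelySatisfiable.satisfiable h
end

section
/- The topological space of pointed intuitionistic Kripke models with the intuitionistic topology is connected: it cannot be written as the union of two nonempty separated subclasses. (Key ingredient: the disjunction property of intuitionistic logic.) -/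
namespace KModel

variable {Θ : Type}

theorem IsIntuitionistic.sat_of_rel {M : KModel Θ} (hM : M.IsIntuitionistic)
    {w v : M.W} (hwv : M.R w v) {φ : IForm Θ} (h : M.Sat w φ) : M.Sat v φ := by
  induction φ generalizing w v with
  | bot => exact h
  | top => trivial
  | atom p => exact hM.2.2 p w v hwv h
  | and φ ψ ihφ ihψ => exact ⟨ihφ hwv h.1, ihψ hwv h.2⟩
  | or φ ψ ihφ ihψ => exact h.imp (ihφ hwv) (ihψ hwv)
  | impl φ ψ _ _ => exact fun u hvu => h u (hM.2.1 w v u hwv hvu)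

structure IsBoundedMorphism (N M : KModel Θ) (f : N.W → M.W) : Prop where
  val_iff : ∀ p u, M.V p (f u) ↔ N.V p u
  map_rel : ∀ u v, N.R u v → M.R (f u) (f v)
  exists_of_rel : ∀ u y, M.R (f u) y → ∃ v, N.R u v ∧ f v = y

theorem IsBoundedMorphism.sat_iff {N M : KModel Θ} {f : N.W → M.W}
    (hf : IsBoundedMorphism N M f) (φ : IForm Θ) (u : N.W) :
    M.Sat (f u) φ ↔ N.Sat u φ := by
  induction φ generalizing u with
  | bot => exact Iff.rfl
  | top => exact Iff.rfl
  | atom p => exact hf.val_iff p u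
  | and φ ψ ihφ ihψ => exact and_congr (ihφ u) (ihψ u)
  | or φ ψ ihφ ihψ => exact or_congr (ihφ u) (ihψ u)
  | impl φ ψ ihφ ihψ =>
    constructor
    · intro h v huv hv
      exact (ihψ v).1 (h (f v) (hf.map_rel u v huv) ((ihφ v).2 hv))
    · intro h y huy hy
      obtain ⟨v, huv, rfl⟩ := hf.exists_of_rel u y huy
      exact (ihψ v).2 (h v huv ((ihφ v).1 hy))

/-- The model with a fresh root `none` below disjoint copies of `M` and `N`. -/
def glue (M N : KModel Θ) : KModel Θ where
  W := Option (M.W ⊕ N.W)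
  R x y := match x, y with
    | none, _ => True
    | some (.inl u), some (.inl v) => M.R u v
    | some (.inr u), some (.inr v) => N.R u v
    | _, _ => False
  V p x := match x with
    | none => False
    | some (.inl u) => M.V p u
    | some (.inr u) => N.V p u

theorem IsIntuitionistic.glue {M N : KModel Θ} (hM : M.IsIntuitionistic)
    (hN : N.IsIntuitionistic) : (M.glue N).IsIntuitionistic := by
  refine ⟨?_, ?_, ?_⟩
  · rintro (_ | u | u)
    exacts [trivial, hM.1 u, hN.1 u]
  · rintro (_ | u | u) (_ | v | v) (_ | w | w) huv hvw <;>
      first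
      | trivial
      | exact hM.2.1 u v w huv hvw
      | exact hN.2.1 u v w huv hvw
  · rintro p (_ | u | u) (_ | v | v) huv hu <;>
      first
      | exact hM.2.2 p u v huv hu
      | exact hN.2.2 p u v huv hu
      | exact huv.elim
      | exact hu.elim

theorem isBoundedMorphism_glue_inl (M N : KModel Θ) :
    IsBoundedMorphism M (M.glue N) (fun u => some (.inl u)) where
  val_iff _ _ := Iff.rfl
  map_rel _ _ h := h
  exists_of_rel := by
    rintro u (_ | v | v) h
    exacts [h.elim, ⟨v, h, rfl⟩, h.elim]

theorem isBoundedMorphism_glue_inr (M N : KModel Θ) :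
    IsBoundedMorphism N (M.glue N) (fun u => some (.inr u)) where
  val_iff _ _ := Iff.rfl
  map_rel _ _ h := h
  exists_of_rel := by
    rintro u (_ | v | v) h
    exacts [h.elim, h.elim, ⟨v, h, rfl⟩]

theorem IsIntuitionistic.sat_inl_of_sat_glue_root {M N : KModel Θ} (hM : M.IsIntuitionistic)
    (hN : N.IsIntuitionistic) {φ : IForm Θ} (h : (M.glue N).Sat none φ) (u : M.W) :
    M.Sat u φ :=
  ((isBoundedMorphism_glue_inl M N).sat_iff φ u).1 <|
    (hM.glue hN).sat_of_rel (w := none) (v := some (.inl u)) trivial h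

theorem IsIntuitionistic.sat_inr_of_sat_glue_root {M N : KModel Θ} (hM : M.IsIntuitionistic)
    (hN : N.IsIntuitionistic) {φ : IForm Θ} (h : (M.glue N).Sat none φ) (u : N.W) :
    N.Sat u φ :=
  ((isBoundedMorphism_glue_inr M N).sat_iff φ u).1 <|
    (hM.glue hN).sat_of_rel (w := none) (v := some (.inr u)) trivial h

end KModel

namespace PModel

variable {Θ : Type}

def glue (x y : PModel Θ) : PModel Θ :=
  ⟨⟨x.1.1.glue y.1.1, none⟩, x.2.glue y.2⟩

theorem mem_thPlus_singleton {x : PModel Θ} {φ : IForm Θ} :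
    φ ∈ ThPlus {x} ↔ x.1.1.Sat x.1.2 φ := by
  simp [ThPlus]

theorem thPlus_glue_subset_left (x y : PModel Θ) : ThPlus {x.glue y} ⊆ ThPlus {x} :=
  fun _ hφ => mem_thPlus_singleton.2 <|
    x.2.sat_inl_of_sat_glue_root y.2 (mem_thPlus_singleton.1 hφ) x.1.2

theorem thPlus_glue_subset_right (x y : PModel Θ) : ThPlus {x.glue y} ⊆ ThPlus {y} :=
  fun _ hφ => mem_thPlus_singleton.2 <|
    x.2.sat_inr_of_sat_glue_root y.2 (mem_thPlus_singleton.1 hφ) y.1.2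

end PModel

section IntuitionisticTopology

variable {Θ : Type} [TopologicalSpace (PModel Θ)]

theorem closure_eq_IMod_thPlus
    (hτ : ∀ C : Set (PModel Θ), IsClosed C ↔ ∃ T : Set (IForm Θ), C = IMod T)
    (A : Set (PModel Θ)) : closure A = IMod (ThPlus A) := by
  have hA : A ⊆ IMod (ThPlus A) := fun x hx _ hφ => hφ x hx
  refine (closure_minimal hA ((hτ _).2 ⟨_, rfl⟩)).antisymm ?_
  obtain ⟨T, hT⟩ := (hτ (closure A)).1 isClosed_closure
  rw [hT]
  exact fun x hx φ hφ => hx φ fun y hy => (hT ▸ subset_closure hy) φ hφ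

theorem mem_closure_of_thPlus_subset
    (hτ : ∀ C : Set (PModel Θ), IsClosed C ↔ ∃ T : Set (IForm Θ), C = IMod T)
    {A : Set (PModel Θ)} {x y : PModel Θ} (hx : x ∈ A) (hxy : ThPlus {x} ⊆ ThPlus {y}) :
    y ∈ closure A := by
  rw [closure_eq_IMod_thPlus hτ]
  intro φ hφ
  exact PModel.mem_thPlus_singleton.1 (hxy (PModel.mem_thPlus_singleton.2 (hφ x hx)))

end IntuitionisticTopology

/-- the intuitionistic topology is connected: the space is not the
union of two nonempty separated subclasses. -/
theorem intuitionistic_topology_connected {Θ : Type}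
    [τ : TopologicalSpace (PModel Θ)]
    (hτ : ∀ C : Set (PModel Θ), IsClosed C ↔ ∃ T : Set (IForm Θ), C = IMod T) :
    ∀ A B : Set (PModel Θ), A.Nonempty → B.Nonempty →
      closure A ∩ B = ∅ → A ∩ closure B = ∅ → A ∪ B ≠ Set.univ := by
  rintro A B ⟨a, ha⟩ ⟨b, hb⟩ hAB hBA hU
  rcases hU.symm ▸ Set.mem_univ (a.glue b) with hA | hB
  · have hbA := mem_closure_of_thPlus_subset hτ hA (PModel.thPlus_glue_subset_right a b)
    exact hAB.subset ⟨hbA, hb⟩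
  · have haB := mem_closure_of_thPlus_subset hτ hB (PModel.thPlus_glue_subset_left a b)
    exact hBA.subset ⟨ha, haB⟩
end

section
/- The quotient space of pointed intuitionistic Kripke models modulo intuitionistic-theory equivalence is not Hausdorff: any two open sets containing distinct points [(M,w)] and [(N,v)] have nonempty intersection, by the disjunction property of intuitionistic logic. -/
/-!
By the disjunction property, a formula refuted at `x` and one refuted at `y` are both refuted
at the root of the sum of the two models placed above a fresh root. Since the closed sets are
the classes `IMod T`, every open neighbourhood of `[x]` contains the classes of all
countermodels of some formula refuted at `x`; hence any two nonempty open sets meet.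
-/

namespace KModel

variable {Θ : Type}

theorem IsIntuitionistic.sat_mono_s16 {M : KModel Θ} (hM : M.IsIntuitionistic) (φ : IForm Θ)
    {u v : M.W} (huv : M.R u v) (hu : M.Sat u φ) : M.Sat v φ := by
  induction φ generalizing u v with
  | bot => exact hu
  | top => trivial
  | atom p => exact hM.2.2 p u v huv hu
  | and φ ψ ihφ ihψ => exact ⟨ihφ huv hu.1, ihψ huv hu.2⟩
  | or φ ψ ihφ ihψ => exact hu.imp (ihφ huv) (ihψ huv)
  | impl φ ψ _ _ => exact fun t hvt => hu t (hM.2.1 u v t huv hvt)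

/-- Bounded morphisms (p-morphisms) preserve and reflect intuitionistic satisfaction. -/
theorem sat_comp_iff {M N : KModel Θ} (f : M.W → N.W)
    (hV : ∀ p a, N.V p (f a) ↔ M.V p a) (hforth : ∀ a b, M.R a b → N.R (f a) (f b))
    (hback : ∀ a t, N.R (f a) t → ∃ b, M.R a b ∧ f b = t) (φ : IForm Θ) (a : M.W) :
    N.Sat (f a) φ ↔ M.Sat a φ := by
  induction φ generalizing a with
  | bot | top => exact Iff.rfl
  | atom p => exact hV p a
  | and φ ψ ihφ ihψ => exact and_congr (ihφ a) (ihψ a)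
  | or φ ψ ihφ ihψ => exact or_congr (ihφ a) (ihψ a)
  | impl φ ψ ihφ ihψ =>
    constructor
    · intro h b hab hφ
      exact (ihψ b).mp (h (f b) (hforth a b hab) ((ihφ b).mpr hφ))
    · intro h t hat hφ
      obtain ⟨b, hab, rfl⟩ := hback a t hat
      exact (ihψ b).mpr (h b hab ((ihφ b).mp hφ))

/-- `M` and `N` side by side above a fresh root `none`. -/
def rootedSum (M N : KModel Θ) : KModel Θ where
  W := Option (M.W ⊕ N.W)
  R a b := match a, b with
    | none, _ => True
    | some (.inl a), some (.inl b) => M.R a b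
    | some (.inr a), some (.inr b) => N.R a b
    | _, _ => False
  V p a := match a with
    | none => False
    | some (.inl a) => M.V p a
    | some (.inr a) => N.V p a

variable {M N : KModel Θ}

theorem IsIntuitionistic.rootedSum (hM : M.IsIntuitionistic) (hN : N.IsIntuitionistic) :
    (M.rootedSum N).IsIntuitionistic := by
  refine ⟨?_, ?_, ?_⟩
  · rintro (_ | a | a)
    exacts [trivial, hM.1 a, hN.1 a]
  · rintro (_ | a | a) (_ | b | b) (_ | c | c) hab hbc <;> simp_all only [KModel.rootedSum]
    exacts [hM.2.1 a b c hab hbc, hN.2.1 a b c hab hbc]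
  · rintro p (_ | a | a) (_ | b | b) hab ha <;> simp_all only [KModel.rootedSum]
    exacts [hM.2.2 p a b hab ha, hN.2.2 p a b hab ha]

theorem rootedSum_root_R (b : (M.rootedSum N).W) : (M.rootedSum N).R none b :=
  trivial

theorem rootedSum_sat_inl_iff (φ : IForm Θ) (a : M.W) :
    (M.rootedSum N).Sat (some (.inl a)) φ ↔ M.Sat a φ :=
  sat_comp_iff (N := M.rootedSum N) (fun a => some (.inl a)) (fun _ _ => Iff.rfl)
    (fun _ _ h => h)
    (fun a t hat => by
      rcases t with _ | b | b
      exacts [hat.elim, ⟨b, hat, rfl⟩, hat.elim]) φ a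

theorem rootedSum_sat_inr_iff (φ : IForm Θ) (a : N.W) :
    (M.rootedSum N).Sat (some (.inr a)) φ ↔ N.Sat a φ :=
  sat_comp_iff (N := M.rootedSum N) (fun a => some (.inr a)) (fun _ _ => Iff.rfl)
    (fun _ _ h => h)
    (fun a t hat => by
      rcases t with _ | b | b
      exacts [hat.elim, hat.elim, ⟨b, hat, rfl⟩]) φ a

end KModel

namespace PModel

variable {Θ : Type}

def Sat (x : PModel Θ) (φ : IForm Θ) : Prop :=
  x.1.1.Sat x.1.2 φ

/-- The disjunction property, in the form of a common countermodel. -/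
theorem exists_not_sat_and_not_sat {x y : PModel Θ} {φ ψ : IForm Θ}
    (hx : ¬ x.Sat φ) (hy : ¬ y.Sat ψ) : ∃ z : PModel Θ, ¬ z.Sat φ ∧ ¬ z.Sat ψ := by
  have hint := x.2.rootedSum y.2
  refine ⟨⟨⟨x.1.1.rootedSum y.1.1, none⟩, hint⟩, fun hφ => hx ?_, fun hψ => hy ?_⟩
  · exact (KModel.rootedSum_sat_inl_iff φ x.1.2).mp
      (hint.sat_mono_s16 φ (KModel.rootedSum_root_R _) hφ)
  · exact (KModel.rootedSum_sat_inr_iff ψ y.1.2).mp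
      (hint.sat_mono_s16 ψ (KModel.rootedSum_root_R _) hψ)

/-- The complement of the preimage of `U` is some `IMod T`, and `x` refutes a member of `T`. -/
theorem exists_not_sat_of_mem_isOpen [TopologicalSpace (PModel Θ)]
    (hclosed : ∀ C : Set (PModel Θ), IsClosed C → ∃ T : Set (IForm Θ), C = IMod T)
    {U : Set (Quotient (thSetoid Θ))} (hU : IsOpen U) {x : PModel Θ}
    (hx : Quotient.mk _ x ∈ U) :
    ∃ φ, ¬ x.Sat φ ∧ ∀ z : PModel Θ, ¬ z.Sat φ → Quotient.mk _ z ∈ U := by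
  obtain ⟨T, hT⟩ := hclosed _ (hU.preimage continuous_quotient_mk').isClosed_compl
  have hxT : x ∉ IMod T := hT ▸ not_not_intro hx
  obtain ⟨φ, hφT, hxφ⟩ : ∃ φ ∈ T, ¬ x.Sat φ := by
    simpa [IMod, PModel.Sat] using hxT
  refine ⟨φ, hxφ, fun z hzφ => ?_⟩
  by_contra hzU
  exact hzφ ((show z ∈ IMod T from hT ▸ hzU) φ hφT)

end PModel

/-- the quotient space is not Hausdorff: any open sets around two
distinct points intersect. -/
theorem quotient_not_hausdorff {Θ : Type} [τ : TopologicalSpace (PModel Θ)]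
    (hτ : ∀ C : Set (PModel Θ), IsClosed C ↔ ∃ T : Set (IForm Θ), C = IMod T) :
    ∀ x y : Quotient (thSetoid Θ), x ≠ y →
      ∀ U V : Set (Quotient (thSetoid Θ)), IsOpen U → IsOpen V →
        x ∈ U → y ∈ V → (U ∩ V).Nonempty := by
  rintro ⟨x⟩ ⟨y⟩ - U V hU hV hxU hyV
  obtain ⟨φ, hxφ, hUφ⟩ := PModel.exists_not_sat_of_mem_isOpen (fun C => (hτ C).mp) hU hxU
  obtain ⟨ψ, hyψ, hVψ⟩ := PModel.exists_not_sat_of_mem_isOpen (fun C => (hτ C).mp) hV hyV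
  obtain ⟨z, hzφ, hzψ⟩ := PModel.exists_not_sat_and_not_sat hxφ hyψ
  exact ⟨Quotient.mk _ z, hUφ z hzφ, hVψ z hzψ⟩
end

section
/- If f is an IL-embedding of intuitionistic Kripke model M_1 into M_2, then the submodel of M_2 with universe f(W_1) is an IL-elementary submodel of M_2, and it is isomorphic to M_1. -/
namespace KModel

variable {Θ : Type} {M N : KModel Θ}

theorem sat_apply_iff_of_surjective (g : M.W → N.W) (hg : Function.Surjective g)
    (hR : ∀ a b, M.R a b ↔ N.R (g a) (g b)) (hV : ∀ p a, M.V p a ↔ N.V p (g a))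
    (φ : IForm Θ) (a : M.W) : N.Sat (g a) φ ↔ M.Sat a φ := by
  induction φ generalizing a with
  | bot | top => exact Iff.rfl
  | atom p => exact (hV p a).symm
  | and φ ψ ihφ ihψ => exact and_congr (ihφ a) (ihψ a)
  | or φ ψ ihφ ihψ => exact or_congr (ihφ a) (ihψ a)
  | impl φ ψ ihφ ihψ =>
    simp only [Sat, hg.forall, hR, ihφ, ihψ]

end KModel

theorem embedding_image_elementary_general {Θ : Type} (M₁ M₂ : KModel Θ)
    (f : M₁.W → M₂.W) (hinj : Function.Injective f)
    (hshom : ∀ v u, M₁.R v u ↔ M₂.R (f v) (f u))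
    (hth : ∀ (v : M₁.W) (φ : IForm Θ), M₁.Sat v φ ↔ M₂.Sat (f v) φ) :
    (∀ (v : (M₂.restrict (Set.range f)).W) (φ : IForm Θ),
      (M₂.restrict (Set.range f)).Sat v φ ↔ M₂.Sat v.1 φ) ∧
    ∃ e : M₁.W ≃ (M₂.restrict (Set.range f)).W,
      (∀ a b, M₁.R a b ↔ (M₂.restrict (Set.range f)).R (e a) (e b)) ∧
      (∀ p a, M₁.V p a ↔ (M₂.restrict (Set.range f)).V p (e a)) := by
  have hV : ∀ p a, M₁.V p a ↔ M₂.V p (f a) := fun p a => hth a (.atom p)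
  have hsat := KModel.sat_apply_iff_of_surjective (N := M₂.restrict (Set.range f))
    (Set.rangeFactorization f) Set.rangeFactorization_surjective hshom hV
  refine ⟨?_, Equiv.ofInjective f hinj, hshom, hV⟩
  rintro ⟨_, a, rfl⟩ φ
  exact (hsat φ a).trans (hth a φ)

/-- the image of an IL-embedding is an IL-elementary submodel of
the target and is isomorphic to the source. -/
theorem embedding_image_elementary {Θ : Type} (M₁ M₂ : KModel Θ)
    (h₁ : M₁.IsIntuitionistic) (h₂ : M₂.IsIntuitionistic)
    (f : M₁.W → M₂.W) (hinj : Function.Injective f)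
    (hatom : ∀ p v, M₁.V p v → M₂.V p (f v))
    (hshom : ∀ v u, M₁.R v u ↔ M₂.R (f v) (f u))
    (hth : ∀ (v : M₁.W) (φ : IForm Θ), M₁.Sat v φ ↔ M₂.Sat (f v) φ) :
    (∀ (v : (M₂.restrict (Set.range f)).W) (φ : IForm Θ),
      (M₂.restrict (Set.range f)).Sat v φ ↔ M₂.Sat v.1 φ) ∧
    ∃ e : M₁.W ≃ (M₂.restrict (Set.range f)).W,
      (∀ a b, M₁.R a b ↔ (M₂.restrict (Set.range f)).R (e a) (e b)) ∧
      (∀ p a, M₁.V p a ↔ (M₂.restrict (Set.range f)).V p (e a)) :=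
  embedding_image_elementary_general M₁ M₂ f hinj hshom hth
end
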